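/- Let M be a set (or type), let ρ : M → M be an involution (ρ ∘ ρ = id), let φ : M → M be a bijection with φ(Fix(ρ)) ∩ Fix(ρ) = ∅, and set ψ = φ ∘ ρ ∘ φ⁻¹ ∘ ρ. If the fixed point set Fix(ψ) is finite, then its cardinality is even. -/

import Mathlib

/-!
Write `ψ = σ ∘ ρ` with `σ = φ ∘ ρ ∘ φ⁻¹`, again an involution. Then `x` is fixed by `ψ` iff
`σ x = ρ x`, a condition symmetric under `ρ`, so `ρ` restricts to an involution of `Fix ψ`.
A fixed point of this restriction would lie in `Fix σ ∩ Fix ρ = φ(Fix ρ) ∩ Fix ρ = ∅`, so the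
involution is free and `Fix ψ` splits into pairs. An infinite `Fix ψ` has `ncard` zero.
-/

open Function Set

section

variable {α : Type*} {ρ σ : α → α}

theorem Function.Involutive.even_ncard_of_mapsTo {f : α → α} (hf : Involutive f) {s : Set α}
    (hs : MapsTo f s s) (hfree : ∀ x ∈ s, f x ≠ x) : Even s.ncard := by
  classical
  rcases s.finite_or_infinite with hfin | hinf
  · have := hfin.fintype
    let g : Function.End s := hs.restrict
    have hg : g ^ 2 ^ 1 = 1 := funext fun x => Subtype.ext (hf x)
    have : IsEmpty g.fixedPoints := ⟨fun x => hfree x.1 x.1.2 (congrArg Subtype.val x.2)⟩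
    have hmod := Equiv.Perm.card_fixedPoints_modEq hg
    rw [Fintype.card_eq_zero (α := g.fixedPoints)] at hmod
    rw [Nat.even_iff, ← Nat.card_coe_set_eq, Nat.card_eq_fintype_card]
    exact hmod
  · rw [hinf.ncard]
    exact ⟨0, rfl⟩

theorem Function.Involutive.mem_fixedPoints_comp_iff (hσ : Involutive σ) {x : α} :
    x ∈ fixedPoints (σ ∘ ρ) ↔ σ x = ρ x :=
  hσ.eq_iff.trans eq_comm

theorem Function.Involutive.mapsTo_fixedPoints_comp (hρ : Involutive ρ) (hσ : Involutive σ) :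
    MapsTo ρ (fixedPoints (σ ∘ ρ)) (fixedPoints (σ ∘ ρ)) := fun x hx => by
  rw [hσ.mem_fixedPoints_comp_iff] at hx ⊢
  rw [hρ, ← hx, hσ]

theorem Function.Involutive.conj (hρ : Involutive ρ) (φ : α ≃ α) :
    Involutive (φ ∘ ρ ∘ φ.symm) := fun x => by simp [hρ _]

theorem Equiv.fixedPoints_conj (φ : α ≃ α) (ρ : α → α) :
    fixedPoints (φ ∘ ρ ∘ φ.symm) = φ '' fixedPoints ρ := by
  rw [φ.image_eq_preimage_symm]
  ext x
  exact φ.eq_symm_apply.symm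

end

theorem even_ncard_fixedPoints_general {M : Type*} (ρ : M → M) (hρ : ρ ∘ ρ = id)
    (φ : M ≃ M) (hdisp : (φ '' {x | ρ x = x}) ∩ {x | ρ x = x} = ∅)
    (ψ : M → M) (hψ : ψ = φ ∘ ρ ∘ φ.symm ∘ ρ) :
    Even {x | ψ x = x}.ncard := by
  have hρ : Involutive ρ := congrFun hρ
  have hσ := hρ.conj φ
  subst hψ
  change Even (fixedPoints ((φ ∘ ρ ∘ φ.symm) ∘ ρ)).ncard
  refine hρ.even_ncard_of_mapsTo (hρ.mapsTo_fixedPoints_comp hσ) fun x hx hρx => ?_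
  have hσx : x ∈ fixedPoints (φ ∘ ρ ∘ φ.symm) := (hσ.mem_fixedPoints_comp_iff.1 hx).trans hρx
  rw [φ.fixedPoints_conj] at hσx
  exact eq_empty_iff_forall_notMem.1 hdisp x ⟨hσx, hρx⟩

/-- Let `M` be a type, `ρ : M → M` an involution (`ρ ∘ ρ = id`), `φ : M ≃ M` a
bijection with `φ(Fix ρ) ∩ Fix ρ = ∅`, and set `ψ = φ ∘ ρ ∘ φ⁻¹ ∘ ρ`.
If the fixed point set `Fix ψ` is finite, then its cardinality is even. -/
theorem even_ncard_fixedPoints {M : Type*} (ρ : M → M) (hρ : ρ ∘ ρ = id)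
    (φ : M ≃ M) (hdisp : (φ '' {x | ρ x = x}) ∩ {x | ρ x = x} = ∅)
    (ψ : M → M) (hψ : ψ = φ ∘ ρ ∘ φ.symm ∘ ρ)
    (hfin : {x | ψ x = x}.Finite) :
    Even {x | ψ x = x}.ncard :=
  even_ncard_fixedPoints_general ρ hρ φ hdisp ψ hψ
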